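/- Let σ be the logistic function, γ a real constant, and define the vector field F(θ₁,θ₂) = (γ·σ(θ₂)·σ'(θ₁), σ(θ₁)·σ'(θ₂)). F is a gradient of some C² function on ℝ² if and only if γ = 1. -/

import Mathlib

noncomputable def logistic (x : ℝ) : ℝ := 1 / (1 + Real.exp (-x))

noncomputable def logisticDeriv (x : ℝ) : ℝ := logistic x * (1 - logistic x)

/-! The field `(γ g(y) f'(x), f(x) g'(y))` is conservative only if `γ = 1` (for nonconstant
`f`, `g`): integrating the first component in `x` gives `J(a, y) - J(b, y) = γ g(y) (f(a) - f(b))`,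
and differentiating this in `y` against the second component gives
`(f(a) - f(b)) g'(y) = γ (f(a) - f(b)) g'(y)`. Conversely, for `γ = 1` the field is the gradient
of `σ(θ₁) σ(θ₂)`. -/

open Real

theorem logistic_eq_sigmoid : logistic = sigmoid :=
  funext fun _ => one_div _

theorem hasDerivAt_logistic (x : ℝ) : HasDerivAt logistic (logisticDeriv x) x := by
  simpa only [logisticDeriv, logistic_eq_sigmoid] using hasDerivAt_sigmoid x

theorem deriv_logistic : deriv logistic = logisticDeriv :=
  funext fun x => (hasDerivAt_logistic x).deriv

theorem differentiable_logistic : Differentiable ℝ logistic :=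
  fun x => (hasDerivAt_logistic x).differentiableAt

theorem contDiff_logistic {n : WithTop ℕ∞} : ContDiff ℝ n logistic :=
  logistic_eq_sigmoid ▸ contDiff_sigmoid.of_le le_top

theorem logisticDeriv_pos (x : ℝ) : 0 < logisticDeriv x := by
  rw [logisticDeriv, logistic_eq_sigmoid]
  exact mul_pos (sigmoid_pos x) (sub_pos.2 (sigmoid_lt_one x))

theorem sub_eq_mul_sub_of_deriv_fst_eq {f g : ℝ → ℝ} {J : ℝ → ℝ → ℝ} {γ : ℝ}
    (hf : Differentiable ℝ f) (hJ : ∀ y, Differentiable ℝ (fun x => J x y))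
    (h₁ : ∀ x y, deriv (fun x => J x y) x = γ * g y * deriv f x) (a b y : ℝ) :
    J a y - J b y = γ * g y * (f a - f b) := by
  obtain ⟨c, hc⟩ := isOpen_univ.exists_eq_add_of_deriv_eq isPreconnected_univ
    (hJ y).differentiableOn (hf.const_mul (γ * g y)).differentiableOn
    (fun x _ => by rw [h₁, deriv_const_mul _ (hf x)])
  linear_combination hc (Set.mem_univ a) - hc (Set.mem_univ b)

theorem eq_one_of_deriv_eq {f g : ℝ → ℝ} {J : ℝ → ℝ → ℝ} {γ : ℝ}
    (hf : Differentiable ℝ f) (hg : Differentiable ℝ g)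
    (hJ₁ : ∀ y, Differentiable ℝ (fun x => J x y)) (hJ₂ : ∀ x, Differentiable ℝ (J x))
    (h₁ : ∀ x y, deriv (fun x => J x y) x = γ * g y * deriv f x)
    (h₂ : ∀ x y, deriv (J x) y = f x * deriv g y)
    {a b y : ℝ} (hab : f a ≠ f b) (hy : deriv g y ≠ 0) : γ = 1 := by
  have hsub : J a - J b = fun y => γ * g y * (f a - f b) :=
    funext (sub_eq_mul_sub_of_deriv_fst_eq hf hJ₁ h₁ a b)
  have hderiv : f a * deriv g y - f b * deriv g y = γ * deriv g y * (f a - f b) := by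
    rw [← h₂, ← h₂, ← deriv_sub (hJ₂ a y) (hJ₂ b y), hsub,
      deriv_mul_const ((hg y).const_mul γ), deriv_const_mul _ (hg y)]
  have : (γ - 1) * ((f a - f b) * deriv g y) = 0 := by linear_combination -hderiv
  simpa [sub_eq_zero, hab, hy] using this

/-- `F(θ₁,θ₂) = (γ·σ(θ₂)·σ'(θ₁), σ(θ₁)·σ'(θ₂))` is the gradient of some C²
function on ℝ² if and only if `γ = 1`. -/
theorem gradient_iff_gamma_eq_one (γ : ℝ) :
    (∃ J : ℝ → ℝ → ℝ, ContDiff ℝ 2 (Function.uncurry J) ∧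
      (∀ θ₁ θ₂ : ℝ,
        deriv (fun x => J x θ₂) θ₁ = γ * logistic θ₂ * logisticDeriv θ₁ ∧
        deriv (fun y => J θ₁ y) θ₂ = logistic θ₁ * logisticDeriv θ₂)) ↔ γ = 1 := by
  constructor
  · rintro ⟨J, hJ, h⟩
    have hJ' : Differentiable ℝ (Function.uncurry J) := hJ.differentiable (by norm_num)
    refine eq_one_of_deriv_eq (J := J) (a := 1) (b := 0) (y := 0)
      differentiable_logistic differentiable_logistic
      (fun y => hJ'.comp (differentiable_id.prodMk (differentiable_const y)))
      (fun x => hJ'.comp ((differentiable_const x).prodMk differentiable_id))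
      (fun x y => by rw [(h x y).1, deriv_logistic])
      (fun x y => by rw [(h x y).2, deriv_logistic])
      (logistic_eq_sigmoid ▸ sigmoid_injective.ne one_ne_zero)
      (deriv_logistic ▸ (logisticDeriv_pos 0).ne')
  · rintro rfl
    refine ⟨fun x y => logistic x * logistic y, ?_, fun x y => ⟨?_, ?_⟩⟩
    · exact (contDiff_logistic.comp contDiff_fst).mul (contDiff_logistic.comp contDiff_snd)
    · rw [deriv_mul_const (differentiable_logistic x), deriv_logistic, one_mul, mul_comm]
    · rw [deriv_const_mul _ (differentiable_logistic y), deriv_logistic]
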